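/- Let W be a real vector space and t : W × W → ℝ a symmetric positive semidefinite bilinear form. Let V ⊆ W be a finite-dimensional linear subspace, N a norm on V, s : V × V → ℝ a symmetric positive semidefinite bilinear form, τ > 0, and c > 0 a constant with t(v,v) + τ·s(v,v) ≥ c·N(v)² for all v ∈ V. Assume additionally there is C > 0 with t(v,v) ≤ C·N(v)² for all v ∈ V. For r ∈ W let π(r) ∈ V denote the unique element with t(π(r),q) + τ·s(π(r),q) = t(r,q) for all q ∈ V. Then for every r ∈ W and every w ∈ V with s(w,q) = 0 for all q ∈ V, one has t(r − π(r), r − π(r))^{1/2} ≤ (1 + C/c) · t(r − w, r − w)^{1/2}. -/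
import Mathlib

private lemma psd_cauchy_schwarz {W : Type*} [AddCommGroup W] [Module ℝ W]
    (t : W →ₗ[ℝ] W →ₗ[ℝ] ℝ)
    (ht_symm : ∀ x y : W, t x y = t y x) (ht_pos : ∀ x : W, 0 ≤ t x x)
    (x y : W) : (t x y) ^ 2 ≤ t x x * t y y := by
  have h : ∀ l : ℝ, 0 ≤ t y y * (l * l) + (2 * t x y) * l + t x x := by
    intro l
    have h0 := ht_pos (x + l • y)
    have hxy := ht_symm x y
    simp only [map_add, map_smul, LinearMap.add_apply, LinearMap.smul_apply,
      smul_eq_mul] at h0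
    rw [← hxy] at h0
    nlinarith [h0]
  have hd := discrim_le_zero h
  rw [discrim] at hd
  nlinarith [hd]

private lemma psd_cs_sqrt {W : Type*} [AddCommGroup W] [Module ℝ W]
    (t : W →ₗ[ℝ] W →ₗ[ℝ] ℝ)
    (ht_symm : ∀ x y : W, t x y = t y x) (ht_pos : ∀ x : W, 0 ≤ t x x)
    (x y : W) : t x y ≤ Real.sqrt (t x x) * Real.sqrt (t y y) := by
  have h := psd_cauchy_schwarz t ht_symm ht_pos x y
  calc t x y ≤ |t x y| := le_abs_self _
    _ = Real.sqrt ((t x y) ^ 2) := (Real.sqrt_sq_eq_abs _).symm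
    _ ≤ Real.sqrt (t x x * t y y) := Real.sqrt_le_sqrt h
    _ = Real.sqrt (t x x) * Real.sqrt (t y y) := Real.sqrt_mul (ht_pos x) _

private lemma psd_sqrt_triangle {W : Type*} [AddCommGroup W] [Module ℝ W]
    (t : W →ₗ[ℝ] W →ₗ[ℝ] ℝ)
    (ht_symm : ∀ x y : W, t x y = t y x) (ht_pos : ∀ x : W, 0 ≤ t x x)
    (x y : W) :
    Real.sqrt (t (x + y) (x + y)) ≤ Real.sqrt (t x x) + Real.sqrt (t y y) := by
  have hcs := psd_cs_sqrt t ht_symm ht_pos x y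
  have hxy := ht_symm x y
  have hexp : t (x + y) (x + y) = t x x + 2 * t x y + t y y := by
    simp only [map_add, LinearMap.add_apply]
    linarith
  have hle : t (x + y) (x + y) ≤ (Real.sqrt (t x x) + Real.sqrt (t y y)) ^ 2 := by
    have hx : Real.sqrt (t x x) ^ 2 = t x x := Real.sq_sqrt (ht_pos x)
    have hy : Real.sqrt (t y y) ^ 2 = t y y := Real.sq_sqrt (ht_pos y)
    nlinarith [hexp, hcs]
  calc Real.sqrt (t (x + y) (x + y))
      ≤ Real.sqrt ((Real.sqrt (t x x) + Real.sqrt (t y y)) ^ 2) :=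
        Real.sqrt_le_sqrt hle
    _ = |Real.sqrt (t x x) + Real.sqrt (t y y)| := Real.sqrt_sq_eq_abs _
    _ = Real.sqrt (t x x) + Real.sqrt (t y y) := abs_of_nonneg (by positivity)

/-- Quasi-best-approximation property of the stabilised projection in the
`t`-seminorm: for every `r ∈ W` and every element `w` of the stabilisation
kernel, `t(r − π(r), r − π(r))^{1/2} ≤ (1 + C/c) · t(r − w, r − w)^{1/2}`. -/
theorem stabilised_projection_quasi_best_approx
    {W : Type*} [AddCommGroup W] [Module ℝ W]
    (t : W →ₗ[ℝ] W →ₗ[ℝ] ℝ)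
    (ht_symm : ∀ x y : W, t x y = t y x) (ht_pos : ∀ x : W, 0 ≤ t x x)
    (V : Submodule ℝ W) [FiniteDimensional ℝ V]
    (N : V → ℝ)
    (hN_nonneg : ∀ v : V, 0 ≤ N v)
    (hN_def : ∀ v : V, N v = 0 ↔ v = 0)
    (hN_smul : ∀ (a : ℝ) (v : V), N (a • v) = |a| * N v)
    (hN_add : ∀ v w : V, N (v + w) ≤ N v + N w)
    (s : V →ₗ[ℝ] V →ₗ[ℝ] ℝ)
    (hs_symm : ∀ x y : V, s x y = s y x) (hs_pos : ∀ x : V, 0 ≤ s x x)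
    (τ c : ℝ) (hτ : 0 < τ) (hc : 0 < c)
    (hcoer : ∀ v : V, c * N v ^ 2 ≤ t v v + τ * s v v)
    (C : ℝ) (hC : 0 < C)
    (hcont : ∀ v : V, t v v ≤ C * N v ^ 2)
    (π : W → V)
    (hπ : ∀ (r : W) (q : V), t (π r : W) (q : W) + τ * s (π r) q = t r (q : W)) :
    ∀ (r : W) (w : V), (∀ q : V, s w q = 0) →
      Real.sqrt (t (r - (π r : W)) (r - (π r : W))) ≤
        (1 + C / c) * Real.sqrt (t (r - (w : W)) (r - (w : W))) := by
  intro r w hw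
  set v : V := π r - w with hv
  set T := Real.sqrt (t (r - (w : W)) (r - (w : W))) with hT
  have hTnn : 0 ≤ T := Real.sqrt_nonneg _
  -- key identity: t v v + τ s v v = t (r - w) v
  have hkey : t (v : W) (v : W) + τ * s v v = t (r - (w : W)) (v : W) := by
    have h1 := hπ r v
    have hsv : s v v = s (π r) v := by
      have hex : s v v = s (π r) v - s w v := by
        simp only [hv, map_sub, LinearMap.sub_apply]
        ring
      rw [hex, hw v]; ring
    have h3 : t (v : W) (v : W) = t (π r : W) (v : W) - t (w : W) (v : W) := by
      have hvw : (v : W) = (π r : W) - (w : W) := by simp [hv]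
      rw [hvw]
      simp only [map_sub, LinearMap.sub_apply]
      ring
    have h4 : t (r - (w : W)) (v : W) = t r (v : W) - t (w : W) (v : W) := by
      simp only [map_sub, LinearMap.sub_apply]
    rw [hsv, h3, h4]; linarith
  -- Cauchy–Schwarz
  have hcs : t (r - (w : W)) (v : W) ≤ T * Real.sqrt (t (v : W) (v : W)) :=
    psd_cs_sqrt t ht_symm ht_pos _ _
  have hsqtv : Real.sqrt (t (v : W) (v : W)) ≤ Real.sqrt C * N v := by
    calc Real.sqrt (t (v : W) (v : W)) ≤ Real.sqrt (C * N v ^ 2) :=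
          Real.sqrt_le_sqrt (hcont v)
      _ = Real.sqrt C * Real.sqrt (N v ^ 2) := Real.sqrt_mul hC.le _
      _ = Real.sqrt C * N v := by rw [Real.sqrt_sq (hN_nonneg v)]
  have hNv : N v ≤ Real.sqrt C * T / c := by
    rcases eq_or_lt_of_le (hN_nonneg v) with h0 | h0
    · rw [← h0]; positivity
    · have h1 : c * N v ^ 2 ≤ T * (Real.sqrt C * N v) := by
        calc c * N v ^ 2 ≤ t (v : W) (v : W) + τ * s v v := hcoer v
          _ = t (r - (w : W)) (v : W) := hkey
          _ ≤ T * Real.sqrt (t (v : W) (v : W)) := hcs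
          _ ≤ T * (Real.sqrt C * N v) := mul_le_mul_of_nonneg_left hsqtv hTnn
      have h2 : c * N v ≤ T * Real.sqrt C := by nlinarith [h1, h0]
      rw [le_div_iff₀ hc]
      nlinarith [h2]
  have hsq2 : Real.sqrt (t (v : W) (v : W)) ≤ (C / c) * T := by
    calc Real.sqrt (t (v : W) (v : W)) ≤ Real.sqrt C * N v := hsqtv
      _ ≤ Real.sqrt C * (Real.sqrt C * T / c) :=
          mul_le_mul_of_nonneg_left hNv (Real.sqrt_nonneg _)
      _ = Real.sqrt C * Real.sqrt C * T / c := by ring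
      _ = (C / c) * T := by rw [Real.mul_self_sqrt hC.le]; ring
  have hdecomp : r - (π r : W) = (r - (w : W)) + (-(v : W)) := by
    simp only [hv]
    push_cast
    abel
  have htri := psd_sqrt_triangle t ht_symm ht_pos (r - (w : W)) (-(v : W))
  have hneg : t (-(v : W)) (-(v : W)) = t (v : W) (v : W) := by simp
  rw [hdecomp]
  calc Real.sqrt (t ((r - (w : W)) + (-(v : W))) ((r - (w : W)) + (-(v : W))))
      ≤ T + Real.sqrt (t (-(v : W)) (-(v : W))) := htri
    _ = T + Real.sqrt (t (v : W) (v : W)) := by rw [hneg]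
    _ ≤ T + (C / c) * T := by linarith
    _ = (1 + C / c) * T := by ring
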